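/- Let T be a finite tree containing at least one branch vertex, and let S ⊆ V(T) be a mutual-visibility set with |S| = μ(T). Then for every leaf u of T, the set S contains exactly one vertex of W(u) = V(P_T(u, b(u))) \ {b(u)}, where b(u) is the branch vertex of T nearest to u; in particular S is disjoint from the Steiner subtree T⟨Br(T)⟩. -/

import Mathlib

open SimpleGraph

variable {V : Type*}

/-- Two vertices `u`, `v` are `X`-visible in `G` if some shortest `u,v`-path
has no internal vertex in `X`. -/
def Visible (G : SimpleGraph V) (X : Set V) (u v : V) : Prop :=
  ∃ p : G.Walk u v, p.length = G.dist u v ∧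
    ∀ x ∈ p.support, x ≠ u → x ≠ v → x ∉ X

/-- `S` is a mutual-visibility set of `G` if every two distinct vertices of `S`
are `S`-visible. -/
def MutualVisSet (G : SimpleGraph V) (S : Set V) : Prop :=
  ∀ u ∈ S, ∀ v ∈ S, u ≠ v → Visible G S u v

/-- The mutual-visibility number of `G`: the maximum cardinality of a
mutual-visibility set of `G`. -/
noncomputable def muNumber (G : SimpleGraph V) : ℕ :=
  sSup {n : ℕ | ∃ S : Set V, MutualVisSet G S ∧ S.ncard = n}

/-- The set of leaves (degree-one vertices) of `G`. -/
def leaves (G : SimpleGraph V) : Set V := {v | (G.neighborSet v).ncard = 1}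

/-- The set of branch vertices (degree at least three) of `G`. -/
def branchVerts (G : SimpleGraph V) : Set V := {v | 3 ≤ (G.neighborSet v).ncard}

/-- The Steiner subtree `T⟨S⟩` of a tree `T` spanned by `S`: the union of the
(unique) paths of `T` between pairs of vertices of `S`; equivalently the minimal
subtree of `T` containing `S`. -/
def steinerSub (T : SimpleGraph V) (S : Set V) : T.Subgraph where
  verts := {x | ∃ u ∈ S, ∃ v ∈ S, ∃ p : T.Walk u v, p.IsPath ∧ x ∈ p.support}
  Adj x y := ∃ u ∈ S, ∃ v ∈ S, ∃ p : T.Walk u v, p.IsPath ∧ s(x, y) ∈ p.edges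
  adj_sub := by
    rintro x y ⟨u, hu, v, hv, p, hp, he⟩
    exact p.adj_of_mem_edges he
  edge_vert := by
    rintro x y ⟨u, hu, v, hv, p, hp, he⟩
    exact ⟨u, hu, v, hv, p, hp, p.fst_mem_support_of_mem_edges he⟩
  symm := by
    refine ⟨?_⟩
    rintro x y ⟨u, hu, v, hv, p, hp, he⟩
    exact ⟨u, hu, v, hv, p, hp, by rwa [Sym2.eq_swap] at he⟩

/-- The set of leaves (degree-one vertices) of a subgraph `H` of `T`. -/
def subgraphLeaves {T : SimpleGraph V} (H : T.Subgraph) : Set V :=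
  {x ∈ H.verts | (H.neighborSet x).ncard = 1}



section TreeAux

variable {T : SimpleGraph V} [DecidableEq V]

noncomputable def PP (hT : T.IsTree) (a c : V) : T.Walk a c :=
  (hT.existsUnique_path a c).choose

lemma PP_isPath (hT : T.IsTree) (a c : V) : (PP hT a c).IsPath :=
  (hT.existsUnique_path a c).choose_spec.1

lemma path_eq_PP (hT : T.IsTree) {a c : V} (q : T.Walk a c) (hq : q.IsPath) :
    q = PP hT a c :=
  (hT.existsUnique_path a c).choose_spec.2 q hq

lemma path_length_eq_dist (hT : T.IsTree) {a c : V} (q : T.Walk a c) (hq : q.IsPath) :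
    q.length = T.dist a c := by
  obtain ⟨w, hw, hl⟩ := hT.isConnected.exists_path_of_dist a c
  rw [path_eq_PP hT q hq, ← path_eq_PP hT w hw, hl]

lemma PP_length (hT : T.IsTree) (a c : V) : (PP hT a c).length = T.dist a c :=
  path_length_eq_dist hT _ (PP_isPath hT a c)

/-- `z` lies on the geodesic from `a` to `c`. -/
def onPath (T : SimpleGraph V) (a z c : V) : Prop :=
  T.dist a z + T.dist z c = T.dist a c

lemma isPath_append (hT : T.IsTree) {a m c : V} {q : T.Walk a m} {r : T.Walk m c}
    (hq : q.IsPath) (hr : r.IsPath)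
    (hd : ∀ x, x ∈ q.support → x ∈ r.support → x = m) : (q.append r).IsPath := by
  rw [Walk.isPath_def, Walk.support_append]
  refine List.Nodup.append hq.support_nodup ((List.tail_sublist _).nodup hr.support_nodup) ?_
  intro x hx hx'
  have hxm : x = m := hd x hx (List.mem_of_mem_tail hx')
  have hnd := hr.support_nodup
  rw [r.support_eq_cons] at hnd
  exact (List.nodup_cons.1 hnd).1 (hxm ▸ hx')

lemma mem_PP_iff (hT : T.IsTree) {a z c : V} :
    z ∈ (PP hT a c).support ↔ onPath T a z c := by
  constructor
  · intro hz
    have h1 := (PP_isPath hT a c).takeUntil hz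
    have h2 := (PP_isPath hT a c).dropUntil hz
    have hsp := Walk.take_spec (PP hT a c) hz
    have hlen : ((PP hT a c).takeUntil z hz).length + ((PP hT a c).dropUntil z hz).length
        = (PP hT a c).length := by
      conv_rhs => rw [← hsp]
      rw [Walk.length_append]
    rw [path_length_eq_dist hT _ h1, path_length_eq_dist hT _ h2, PP_length] at hlen
    exact hlen
  · intro h
    have hw : ((PP hT a z).append (PP hT z c)).length = T.dist a c := by
      rw [Walk.length_append, PP_length, PP_length]; exact h
    have hp := Walk.isPath_of_length_eq_dist _ (by rw [hw])
    have hz : z ∈ ((PP hT a z).append (PP hT z c)).support :=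
      Walk.subset_support_append_left _ _ (Walk.end_mem_support _)
    rwa [← path_eq_PP hT _ hp]
lemma onPath_of_mem_path (hT : T.IsTree) {a c : V} {q : T.Walk a c} (hq : q.IsPath)
    {z : V} (hz : z ∈ q.support) : onPath T a z c := by
  rw [path_eq_PP hT q hq] at hz
  exact (mem_PP_iff hT).1 hz

lemma dist_start_cons (hT : T.IsTree) {a b c z : V} (h : T.Adj a b) {q' : T.Walk b c}
    (hq : (Walk.cons h q').IsPath) (hz : z ∈ q'.support) :
    T.dist a z = 1 + T.dist b z := by
  have hq' : q'.IsPath := hq.of_cons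
  have hbz : onPath T b z c := onPath_of_mem_path hT hq' hz
  have hab : T.dist a b = 1 := dist_eq_one_iff_adj.2 h
  have hac : T.dist a c = 1 + T.dist b c := by
    have h1 := path_length_eq_dist hT _ hq
    have h2 := path_length_eq_dist hT _ hq'
    rw [Walk.length_cons] at h1
    omega
  have t1 : T.dist a z ≤ T.dist a b + T.dist b z := hT.isConnected.dist_triangle
  have t2 : T.dist a c ≤ T.dist a z + T.dist z c := hT.isConnected.dist_triangle
  unfold onPath at hbz
  omega

lemma onPath_of_le_aux (hT : T.IsTree) {a c : V} (q : T.Walk a c) (hq : q.IsPath) :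
    ∀ x y, x ∈ q.support → y ∈ q.support → T.dist a x ≤ T.dist a y →
    onPath T x y c := by
  induction q with
  | nil =>
    intro x y hx hy _
    simp only [Walk.support_nil, List.mem_singleton] at hx hy
    subst hx; subst hy
    simp [onPath]
  | @cons a b c h q' ih =>
    intro x y hx hy hxy
    simp only [Walk.support_cons, List.mem_cons] at hx hy
    rcases hx with rfl | hx
    · rcases hy with rfl | hy
      · simp [onPath]
      · -- x = a, y ∈ q'
        have hbz : onPath T b y c := onPath_of_mem_path hT hq.of_cons hy
        have hay : T.dist x y = 1 + T.dist b y := dist_start_cons hT h hq hy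
        have hac : T.dist x c = 1 + T.dist b c := by
          have h1 := path_length_eq_dist hT _ hq
          have h2 := path_length_eq_dist hT _ hq.of_cons
          rw [Walk.length_cons] at h1
          omega
        unfold onPath at *
        omega
    · rcases hy with rfl | hy
      · -- y = a : then dist a x ≤ 0
        have hx0 : T.dist y x = 0 := by
          have := T.dist_self (v := y)
          omega
        have : y = x := (hT.isConnected.dist_eq_zero_iff).1 hx0
        subst this
        exact onPath_of_mem_path hT hq (Walk.support_cons _ _ ▸ List.mem_cons_self)
      · have h1 : T.dist a x = 1 + T.dist b x := dist_start_cons hT h hq hx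
        have h2 : T.dist a y = 1 + T.dist b y := dist_start_cons hT h hq hy
        exact ih hq.of_cons x y hx hy (by omega)

lemma onPath_of_le (hT : T.IsTree) {a c x y : V} (hx : onPath T a x c)
    (hy : onPath T a y c) (hxy : T.dist a x ≤ T.dist a y) : onPath T x y c := by
  have hx' := (mem_PP_iff hT).2 hx
  have hy' := (mem_PP_iff hT).2 hy
  exact onPath_of_le_aux hT _ (PP_isPath hT a c) x y hx' hy' hxy

lemma onPath_left_of_le (hT : T.IsTree) {a c x y : V} (hx : onPath T a x c)
    (hy : onPath T a y c) (hxy : T.dist a x ≤ T.dist a y) : onPath T a x y := by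
  have h := onPath_of_le hT hx hy hxy
  unfold onPath at *
  omega

lemma eq_of_onPath_dist_eq (hT : T.IsTree) {a c x y : V} (hx : onPath T a x c)
    (hy : onPath T a y c) (hxy : T.dist a x = T.dist a y) : x = y := by
  have h1 := onPath_of_le hT hx hy (le_of_eq hxy)
  have h2 := onPath_of_le hT hy hx (ge_of_eq hxy)
  unfold onPath at *
  have hcomm : T.dist x y = T.dist y x := T.dist_comm
  have : T.dist x y = 0 := by omega
  exact (hT.isConnected.dist_eq_zero_iff).1 this
variable [Fintype V]

lemma onPath_self_left (hT : T.IsTree) (a c : V) : onPath T a a c := by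
  simp [onPath]

lemma onPath_self_right (hT : T.IsTree) (a c : V) : onPath T a c c := by
  simp [onPath]

lemma dist_pos_of_ne (hT : T.IsTree) {x y : V} (h : x ≠ y) : 0 < T.dist x y :=
  hT.isConnected.pos_dist_of_ne h

lemma median_exists (hT : T.IsTree) (a b c : V) :
    ∃ m, onPath T a m c ∧ onPath T b m a ∧ onPath T b m c := by
  classical
  obtain ⟨m, hmX, hmin⟩ := Set.exists_min_image {x | onPath T a x c} (fun x => T.dist b x)
    (Set.toFinite _) ⟨a, onPath_self_left hT a c⟩
  have hmX' : T.dist a m + T.dist m c = T.dist a c := hmX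
  refine ⟨m, hmX, ?_, ?_⟩
  · -- onPath b m a
    have hdisj : ∀ x, x ∈ (PP hT b m).support → x ∈ (PP hT m a).support → x = m := by
      intro z h1 h2
      have hz1 : onPath T b z m := (mem_PP_iff hT).1 h1
      have hz2 : onPath T m z a := (mem_PP_iff hT).1 h2
      have hzX : onPath T a z c := by
        have t1 : T.dist a c ≤ T.dist a z + T.dist z c := hT.isConnected.dist_triangle
        have t2 : T.dist z c ≤ T.dist z m + T.dist m c := hT.isConnected.dist_triangle
        have c1 : T.dist a z = T.dist z a := T.dist_comm
        have c2 : T.dist a m = T.dist m a := T.dist_comm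
        have c3 : T.dist z m = T.dist m z := T.dist_comm
        unfold onPath at *
        omega
      have hle := hmin z hzX
      unfold onPath at *
      have hz0 : T.dist z m = 0 := by omega
      exact (hT.isConnected.dist_eq_zero_iff).1 hz0
    have hpath := isPath_append hT (PP_isPath hT b m) (PP_isPath hT m a) hdisj
    have hlen := path_length_eq_dist hT _ hpath
    rw [Walk.length_append, PP_length, PP_length] at hlen
    exact hlen
  · -- onPath b m c
    have hdisj : ∀ x, x ∈ (PP hT b m).support → x ∈ (PP hT m c).support → x = m := by
      intro z h1 h2
      have hz1 : onPath T b z m := (mem_PP_iff hT).1 h1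
      have hz2 : onPath T m z c := (mem_PP_iff hT).1 h2
      have hzX : onPath T a z c := by
        have t1 : T.dist a c ≤ T.dist a z + T.dist z c := hT.isConnected.dist_triangle
        have t2 : T.dist a z ≤ T.dist a m + T.dist m z := hT.isConnected.dist_triangle
        unfold onPath at *
        omega
      have hle := hmin z hzX
      unfold onPath at *
      have hz0 : T.dist z m = 0 := by omega
      exact (hT.isConnected.dist_eq_zero_iff).1 hz0
    have hpath := isPath_append hT (PP_isPath hT b m) (PP_isPath hT m c) hdisj
    have hlen := path_length_eq_dist hT _ hpath
    rw [Walk.length_append, PP_length, PP_length] at hlen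
    exact hlen

lemma adj_dist_cases (hT : T.IsTree) {u w : V} (h : T.Adj u w) (s : V) :
    T.dist s w = T.dist s u + 1 ∨ T.dist s u = T.dist s w + 1 := by
  have huw : T.dist u w = 1 := dist_eq_one_iff_adj.2 h
  have hwu : T.dist w u = 1 := dist_eq_one_iff_adj.2 h.symm
  have hne : T.dist s u ≠ T.dist s w := by
    intro heq
    have hwns : w ∉ (PP hT s u).support := by
      intro hm
      have := (mem_PP_iff hT).1 hm
      unfold onPath at this
      omega
    have huns : u ∉ (PP hT s w).support := by
      intro hm
      have := (mem_PP_iff hT).1 hm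
      unfold onPath at this
      omega
    have hpath : ((PP hT s w).append (Walk.cons h.symm Walk.nil)).IsPath := by
      refine isPath_append hT (PP_isPath hT s w) ?_ ?_
      · simp [Walk.isPath_def, h.ne']
      · intro x hx hx'
        simp only [Walk.support_cons, Walk.support_nil, List.mem_cons,
          List.not_mem_nil, or_false] at hx'
        rcases hx' with rfl | rfl
        · rfl
        · exact absurd hx huns
    have hw : w ∈ ((PP hT s w).append (Walk.cons h.symm Walk.nil)).support :=
      Walk.subset_support_append_left _ _ (Walk.end_mem_support _)
    rw [path_eq_PP hT _ hpath] at hw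
    exact hwns hw
  have t1 : T.dist s w ≤ T.dist s u + 1 := by
    have := hT.isConnected.dist_triangle (u := s) (v := u) (w := w)
    omega
  have t2 : T.dist s u ≤ T.dist s w + 1 := by
    have := hT.isConnected.dist_triangle (u := s) (v := w) (w := u)
    omega
  omega

/-- `n` is the neighbor of `s` in the direction of `x`. -/
def Dir (T : SimpleGraph V) (s n x : V) : Prop :=
  T.Adj s n ∧ T.dist n x + 1 = T.dist s x

lemma dir_exists (hT : T.IsTree) {s x : V} (h : x ≠ s) : ∃ n, Dir T s n x := by
  have hns : s ≠ x := Ne.symm h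
  have hnil : ¬(PP hT s x).Nil := Walk.not_nil_of_ne hns
  refine ⟨(PP hT s x).getVert 1, Walk.adj_snd hnil, ?_⟩
  have hmem : (PP hT s x).getVert 1 ∈ (PP hT s x).support :=
    Walk.mem_support_iff_exists_getVert.2 ⟨1, rfl, by
      have := Walk.not_nil_iff_lt_length.1 hnil
      omega⟩
  have hop := (mem_PP_iff hT).1 hmem
  have hadj : T.dist s ((PP hT s x).getVert 1) = 1 :=
    dist_eq_one_iff_adj.2 (Walk.adj_snd hnil)
  unfold onPath at hop
  omega

lemma dir_unique (hT : T.IsTree) {s x n n' : V} (h1 : Dir T s n x) (h2 : Dir T s n' x) :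
    n = n' := by
  obtain ⟨ha1, hd1⟩ := h1
  obtain ⟨ha2, hd2⟩ := h2
  have e1 : T.dist s n = 1 := dist_eq_one_iff_adj.2 ha1
  have e2 : T.dist s n' = 1 := dist_eq_one_iff_adj.2 ha2
  have o1 : onPath T s n x := by unfold onPath; omega
  have o2 : onPath T s n' x := by unfold onPath; omega
  exact eq_of_onPath_dist_eq hT o1 o2 (by omega)

lemma dir_of_onPath (hT : T.IsTree) {s x n m : V} (hn : Dir T s n x)
    (hm : onPath T s m x) (hms : m ≠ s) : Dir T s n m := by
  obtain ⟨ha, hd⟩ := hn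
  have e1 : T.dist s n = 1 := dist_eq_one_iff_adj.2 ha
  have hnx : onPath T s n x := by unfold onPath; omega
  have hsm : 1 ≤ T.dist s m := dist_pos_of_ne hT (Ne.symm hms)
  have h2 := onPath_of_le hT hnx hm (by omega)
  refine ⟨ha, ?_⟩
  unfold onPath at *
  omega

lemma dir_split (hT : T.IsTree) {s x y n n' : V} (hn : Dir T s n x) (hn' : Dir T s n' y)
    (hne : n ≠ n') : onPath T x s y := by
  by_contra hc
  obtain ⟨m, hm1, hm2, hm3⟩ := median_exists hT x s y
  -- hm1 : onPath x m y, hm2 : onPath s m x, hm3 : onPath s m y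
  have hms : m ≠ s := by
    rintro rfl
    exact hc hm1
  have d1 := dir_of_onPath hT hn hm2 hms
  have d2 := dir_of_onPath hT hn' hm3 hms
  exact hne (dir_unique hT d1 d2)

lemma dir_eq_of_not_onPath (hT : T.IsTree) {s x y n n' : V} (hn : Dir T s n x)
    (hn' : Dir T s n' y) (hc : ¬ onPath T x s y) : n = n' := by
  by_contra h
  exact hc (dir_split hT hn hn' h)
lemma extend_to_leaf (hT : T.IsTree) (a x : V) (hne : ∃ w, T.Adj a w) :
    ∃ l, l ∈ leaves T ∧ onPath T a x l := by
  classical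
  have hxx : onPath T a x x := by unfold onPath; simp [T.dist_self]
  obtain ⟨l, hlD, hmax⟩ := Set.exists_max_image {y | onPath T a x y} (fun y => T.dist a y)
    (Set.toFinite _) ⟨x, hxx⟩
  have hlD' : T.dist a x + T.dist x l = T.dist a l := hlD
  by_cases hleaf : l ∈ leaves T
  · exact ⟨l, hleaf, hlD⟩
  exfalso
  have hla : l ≠ a := by
    intro hh
    obtain ⟨w, hw⟩ := hne
    have hal : T.dist a l = 0 := by rw [hh]; exact T.dist_self
    have hxa : T.dist a x = 0 := by omega
    have hwD : onPath T a x w := by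
      have hx0 : a = x := (hT.isConnected.dist_eq_zero_iff).1 hxa
      unfold onPath
      rw [← hx0]
      simp [T.dist_self]
    have h1 := hmax w hwD
    have h2 : T.dist a w = 1 := dist_eq_one_iff_adj.2 hw
    omega
  obtain ⟨e, he⟩ := dir_exists hT (Ne.symm hla)
  have hedist : T.dist l e = 1 := dist_eq_one_iff_adj.2 he.1
  have hcard : 1 < (T.neighborSet l).ncard := by
    have h1 : 0 < (T.neighborSet l).ncard := by
      rw [Set.ncard_pos (Set.toFinite _)]
      exact ⟨e, he.1⟩
    have h2 : (T.neighborSet l).ncard ≠ 1 := hleaf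
    omega
  obtain ⟨v, hv, hvne⟩ := Set.exists_ne_of_one_lt_ncard hcard e
  have hv : T.Adj l v := hv
  rcases adj_dist_cases hT hv a with hcase | hcase
  · have hvD : onPath T a x v := by
      have t1 : T.dist x v ≤ T.dist x l + T.dist l v := hT.isConnected.dist_triangle
      have t2 : T.dist a v ≤ T.dist a x + T.dist x v := hT.isConnected.dist_triangle
      have hlv : T.dist l v = 1 := dist_eq_one_iff_adj.2 hv
      unfold onPath
      omega
    have := hmax v hvD
    omega
  · have hdv : Dir T l v a := ⟨hv, by
      have c1 : T.dist v a = T.dist a v := T.dist_comm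
      have c2 : T.dist l a = T.dist a l := T.dist_comm
      omega⟩
    exact hvne (dir_unique hT hdv he)

lemma internal_two_nbrs (hT : T.IsTree) {a c : V} {q : T.Walk a c} (hq : q.IsPath) {z : V}
    (hz : z ∈ q.support) (hza : z ≠ a) (hzc : z ≠ c) :
    ∃ x y, x ≠ y ∧ T.Adj z x ∧ T.Adj z y ∧ x ∈ q.support ∧ y ∈ q.support := by
  induction q with
  | nil =>
    simp only [Walk.support_nil, List.mem_singleton] at hz
    exact absurd hz hza
  | @cons a b c h q' ih =>
    simp only [Walk.support_cons, List.mem_cons] at hz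
    rcases hz with rfl | hz
    · exact absurd rfl hza
    by_cases hzb : z = b
    · subst hzb
      have hnil : ¬q'.Nil := Walk.not_nil_of_ne hzc
      have hmem : q'.getVert 1 ∈ q'.support :=
        Walk.mem_support_iff_exists_getVert.2 ⟨1, rfl, by
          have := Walk.not_nil_iff_lt_length.1 hnil
          omega⟩
      refine ⟨a, q'.getVert 1, ?_, h.symm, Walk.adj_snd hnil, by simp, by simp [hmem]⟩
      intro heq
      rw [← heq] at hmem
      exact ((Walk.cons_isPath_iff h q').1 hq).2 hmem
    · obtain ⟨x, y, hxy, hx1, hy1, hx2, hy2⟩ := ih hq.of_cons hz hzb hzc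
      exact ⟨x, y, hxy, hx1, hy1, by simp [hx2], by simp [hy2]⟩

lemma leaf_not_internal (hT : T.IsTree) {u : V} (hu : u ∈ leaves T) {a c : V}
    (ha : u ≠ a) (hc : u ≠ c) (h : onPath T a u c) : False := by
  classical
  have hmem : u ∈ (PP hT a c).support := (mem_PP_iff hT).2 h
  obtain ⟨x, y, hxy, hx1, hy1, _, _⟩ :=
    internal_two_nbrs hT (PP_isPath hT a c) hmem ha hc
  have h2 : 1 < (T.neighborSet u).ncard := by
    rw [Set.one_lt_ncard_iff (Set.toFinite _)]
    exact ⟨x, y, hx1, hy1, hxy⟩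
  have h3 := hu
  unfold leaves at h3
  simp only [Set.mem_setOf_eq] at h3
  omega

lemma leg_closed (hT : T.IsTree) {u bu : V} (hu : u ∈ leaves T) (hbu : bu ∈ branchVerts T)
    (hmin : ∀ c ∈ branchVerts T, T.dist u bu ≤ T.dist u c) {x y : V}
    (hx : onPath T u x bu) (hxb : x ≠ bu) (hadj : T.Adj x y) : onPath T u y bu := by
  classical
  have hub : u ≠ bu := by
    intro h
    have h1 := hu; have h2 := hbu
    unfold leaves at h1; unfold branchVerts at h2
    simp only [Set.mem_setOf_eq] at h1 h2
    rw [h] at h1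
    omega
  by_cases hxu : x = u
  · obtain ⟨n, hn⟩ := dir_exists hT (Ne.symm hub)
    have hyn : y = n := by
      have h1 := hu
      unfold leaves at h1
      simp only [Set.mem_setOf_eq] at h1
      obtain ⟨a2, ha2⟩ := Set.ncard_eq_one.1 h1
      have hy : y ∈ T.neighborSet u := by rw [← hxu]; exact hadj
      have hn' : n ∈ T.neighborSet u := hn.1
      rw [ha2] at hy hn'
      simp only [Set.mem_singleton_iff] at hy hn'
      rw [hy, hn']
    have h2 := hn.2
    have h1 : T.dist u n = 1 := dist_eq_one_iff_adj.2 hn.1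
    rw [hyn]
    unfold onPath
    omega
  · have hxbr : x ∉ branchVerts T := by
      intro hmem
      have h1 := hmin x hmem
      have hpos : 0 < T.dist x bu := dist_pos_of_ne hT hxb
      unfold onPath at hx
      omega
    have hcard2 : (T.neighborSet x).ncard ≤ 2 := by
      unfold branchVerts at hxbr
      simp only [Set.mem_setOf_eq] at hxbr
      omega
    have hmem : x ∈ (PP hT u bu).support := (mem_PP_iff hT).2 hx
    obtain ⟨x1, x2, h12, ha1, ha2, hm1, hm2⟩ :=
      internal_two_nbrs hT (PP_isPath hT u bu) hmem hxu hxb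
    have hsub : y = x1 ∨ y = x2 := by
      by_contra hcon
      push_neg at hcon
      have h3 : 2 < (T.neighborSet x).ncard := by
        rw [Set.two_lt_ncard_iff (Set.toFinite _)]
        exact ⟨y, x1, x2, hadj, ha1, ha2, hcon.1, hcon.2, h12⟩
      omega
    rcases hsub with rfl | rfl
    · exact (mem_PP_iff hT).1 hm1
    · exact (mem_PP_iff hT).1 hm2

lemma leg_reach (hT : T.IsTree) {u bu : V} (hu : u ∈ leaves T) (hbu : bu ∈ branchVerts T)
    (hmin : ∀ c ∈ branchVerts T, T.dist u bu ≤ T.dist u c) :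
    ∀ {x' s3' : V} (r : T.Walk x' s3'), onPath T u x' bu → x' ≠ bu →
      (∀ z ∈ r.support, z ≠ bu) → onPath T u s3' bu ∧ s3' ≠ bu := by
  intro x' s3' r
  induction r with
  | nil => intro h1 h2 _; exact ⟨h1, h2⟩
  | cons hadj r' ih =>
    rename_i va vb vc
    intro h1 h2 hsupp
    have hb1 : onPath T u vb bu := leg_closed hT hu hbu hmin h1 h2 hadj
    have hb2 : vb ≠ bu := hsupp vb (by simp)
    exact ih hb1 hb2 (fun z hz => hsupp z (by simp [hz]))

lemma leg_exit (hT : T.IsTree) {u bu : V} (hu : u ∈ leaves T) (hbu : bu ∈ branchVerts T)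
    (hmin : ∀ c ∈ branchVerts T, T.dist u bu ≤ T.dist u c) {x s3 : V}
    (hx1 : onPath T u x bu) (hx2 : x ≠ bu)
    (hs3 : ¬(onPath T u s3 bu ∧ s3 ≠ bu)) : onPath T x bu s3 := by
  classical
  by_cases hsb : s3 = bu
  · subst hsb
    exact onPath_self_right hT x s3
  by_contra hcon
  have hbu_mem : bu ∉ (PP hT x s3).support := by
    intro hmem
    exact hcon ((mem_PP_iff hT).1 hmem)
  exact hs3 (leg_reach hT hu hbu hmin (PP hT x s3) hx1 hx2
    (fun z hz => by rintro rfl; exact hbu_mem hz))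
lemma onPath_comm (hT : T.IsTree) {a z c : V} (h : onPath T a z c) : onPath T c z a := by
  have c1 : T.dist c z = T.dist z c := T.dist_comm
  have c2 : T.dist z a = T.dist a z := T.dist_comm
  have c3 : T.dist c a = T.dist a c := T.dist_comm
  unfold onPath at *
  omega

lemma mv_block (hT : T.IsTree) {S : Set V} (hS : MutualVisSet T S) {s1 s3 z : V}
    (h1 : s1 ∈ S) (h3 : s3 ∈ S) (hz : z ∈ S) (hne : s1 ≠ s3)
    (hop : onPath T s1 z s3) : z = s1 ∨ z = s3 := by
  by_contra hcon
  push_neg at hcon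
  obtain ⟨w, hwlen, hwnot⟩ := hS s1 h1 s3 h3 hne
  have hwp : w.bypass.IsPath := Walk.bypass_isPath w
  have hmem : z ∈ w.bypass.support := by
    rw [path_eq_PP hT _ hwp]
    exact (mem_PP_iff hT).2 hop
  exact hwnot z (Walk.support_bypass_subset w hmem) hcon.1 hcon.2 hz

lemma leaves_mv (hT : T.IsTree) : MutualVisSet T (leaves T) := by
  intro u hu v hv hne
  refine ⟨PP hT u v, PP_length hT u v, fun x hx hxu hxv hxl => ?_⟩
  exact leaf_not_internal hT hxl hxu hxv ((mem_PP_iff hT).1 hx)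

lemma mu_ge_leaves (hT : T.IsTree) : (leaves T).ncard ≤ muNumber T := by
  apply le_csSup
  · refine ⟨Fintype.card V, ?_⟩
    rintro n ⟨S, -, rfl⟩
    have := Set.ncard_le_ncard (Set.subset_univ S) Set.finite_univ
    rwa [Set.ncard_univ, Nat.card_eq_fintype_card] at this
  · exact ⟨leaves T, leaves_mv hT, rfl⟩

lemma dir_extend (hT : T.IsTree) {s n x y : V} (hn : Dir T s n x) (hxy : onPath T s x y) :
    Dir T s n y := by
  obtain ⟨ha, hd⟩ := hn
  have e1 : T.dist s n = 1 := dist_eq_one_iff_adj.2 ha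
  have t1 : T.dist n y ≤ T.dist n x + T.dist x y := hT.isConnected.dist_triangle
  have t2 : T.dist s y ≤ T.dist s n + T.dist n y := hT.isConnected.dist_triangle
  refine ⟨ha, ?_⟩
  unfold onPath at hxy
  omega

lemma order3 (hT : T.IsTree) {u c x y z : V} (hx : onPath T u x c) (hy : onPath T u y c)
    (hz : onPath T u z c) (h1 : T.dist u x ≤ T.dist u y) (h2 : T.dist u y ≤ T.dist u z) :
    onPath T x y z := by
  have a1 := onPath_of_le hT hx hy h1
  have a2 := onPath_of_le hT hy hz h2
  have a3 := onPath_of_le hT hx hz (h1.trans h2)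
  unfold onPath at *
  omega
/-- The convex hull (Steiner subtree vertex set) of `S` in the tree `T`. -/
def hull (T : SimpleGraph V) (S : Set V) : Set V :=
  {x | ∃ t1 ∈ S, ∃ t2 ∈ S, onPath T t1 x t2}

lemma subset_hull (hT : T.IsTree) (S : Set V) : S ⊆ hull T S := by
  intro s hs
  exact ⟨s, hs, s, hs, onPath_self_left hT s s⟩

lemma hull_dir (hT : T.IsTree) {S : Set V} {s x n : V} (hx : x ∈ hull T S) (hxs : x ≠ s)
    (hn : Dir T s n x) : ∃ t ∈ S, t ≠ s ∧ Dir T s n t := by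
  obtain ⟨t1, ht1, t2, ht2, hx12⟩ := hx
  by_cases h1 : t1 = s
  · subst h1
    by_cases h2 : t2 = t1
    · exfalso
      rw [h2] at hx12
      have h0 : T.dist t1 t1 = 0 := T.dist_self
      have : T.dist t1 x = 0 := by unfold onPath at hx12; omega
      exact hxs ((hT.isConnected.dist_eq_zero_iff).1 this).symm
    · exact ⟨t2, ht2, fun h => h2 h, dir_extend hT hn hx12⟩
  by_cases h2 : t2 = s
  · subst h2
    exact ⟨t1, ht1, h1, dir_extend hT hn (onPath_comm hT hx12)⟩
  by_cases hmid : onPath T t1 s t2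
  · rcases lt_trichotomy (T.dist t1 x) (T.dist t1 s) with hlt | heq | hgt
    · have h3 : onPath T t1 x s := onPath_left_of_le hT hx12 hmid hlt.le
      exact ⟨t1, ht1, h1, dir_extend hT hn (onPath_comm hT h3)⟩
    · exact absurd (eq_of_onPath_dist_eq hT hx12 hmid heq) hxs
    · have h3 : onPath T s x t2 := onPath_of_le hT hmid hx12 hgt.le
      exact ⟨t2, ht2, h2, dir_extend hT hn h3⟩
  · have hc : ¬ onPath T x s t1 := by
      intro hcc
      apply hmid
      have hcc' : onPath T t1 s x := onPath_comm hT hcc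
      have t1' : T.dist s t2 ≤ T.dist s x + T.dist x t2 := hT.isConnected.dist_triangle
      have t2' : T.dist t1 t2 ≤ T.dist t1 s + T.dist s t2 := hT.isConnected.dist_triangle
      unfold onPath at *
      omega
    obtain ⟨n1, hn1⟩ := dir_exists hT (show t1 ≠ s from h1)
    have := dir_eq_of_not_onPath hT hn hn1 hc
    exact ⟨t1, ht1, h1, this ▸ hn1⟩

lemma common_dir (hT : T.IsTree) {S : Set V} (hS : MutualVisSet T S) {s nst ts : V}
    (hs : s ∈ S) (hts : ts ∈ S) (htsne : ts ≠ s) (hnst : Dir T s nst ts) :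
    ∀ t ∈ S, t ≠ s → Dir T s nst t := by
  intro t ht htne
  obtain ⟨nt, hnt⟩ := dir_exists hT htne
  by_cases heq : nt = nst
  · exact heq ▸ hnt
  by_cases htt : t = ts
  · subst htt
    exact absurd (dir_unique hT hnt hnst) heq
  exfalso
  have hsplit := dir_split hT hnt hnst heq
  rcases mv_block hT hS ht hts hs htt hsplit with h | h
  · exact htne h.symm
  · exact htsne h.symm

lemma gate_exists (hT : T.IsTree) {S : Set V} (hS : MutualVisSet T S) {s : V} (hs : s ∈ S)
    (hex : ∃ t ∈ S, t ≠ s) :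
    ∃ l, l ∈ leaves T ∧ ∀ z, onPath T s z l → z ≠ s → z ∉ hull T S := by
  classical
  by_cases hleaf : s ∈ leaves T
  · refine ⟨s, hleaf, fun z hz hzs => absurd ?_ hzs⟩
    have h0 : T.dist s s = 0 := T.dist_self
    have : T.dist s z = 0 := by unfold onPath at hz; omega
    exact ((hT.isConnected.dist_eq_zero_iff).1 this).symm
  obtain ⟨ts, hts, htsne⟩ := hex
  obtain ⟨nst, hnst⟩ := dir_exists hT htsne
  have hcard : 1 < (T.neighborSet s).ncard := by
    have h1 : 0 < (T.neighborSet s).ncard := by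
      rw [Set.ncard_pos (Set.toFinite _)]
      exact ⟨nst, hnst.1⟩
    have h2 : (T.neighborSet s).ncard ≠ 1 := hleaf
    omega
  obtain ⟨w, hw, hwne⟩ := Set.exists_ne_of_one_lt_ncard hcard nst
  have hw : T.Adj s w := hw
  obtain ⟨l, hl, hol⟩ := extend_to_leaf hT s w ⟨w, hw⟩
  refine ⟨l, hl, fun z hz hzs hzh => ?_⟩
  have hdw : Dir T s w l := ⟨hw, by
    have : T.dist s w = 1 := dist_eq_one_iff_adj.2 hw
    unfold onPath at hol
    omega⟩
  have hdz : Dir T s w z := dir_of_onPath hT hdw hz hzs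
  obtain ⟨t, ht, htne, hdt⟩ := hull_dir hT hzh hzs hdz
  by_cases htts : t = ts
  · subst htts
    exact hwne (dir_unique hT hdt hnst)
  have hsplit := dir_split hT hdt hnst hwne
  rcases mv_block hT hS ht hts hs htts hsplit with h | h
  · exact htne h.symm
  · exact htsne h.symm

lemma two_nbrs_ne (hT : T.IsTree) {s : V} (h3 : s ∈ branchVerts T) (nst : V) :
    ∃ w1 w2, w1 ≠ w2 ∧ T.Adj s w1 ∧ T.Adj s w2 ∧ w1 ≠ nst ∧ w2 ≠ nst := by
  have h3' : 2 < (T.neighborSet s).ncard := h3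
  obtain ⟨a, b, c, ha, hb, hc, hab, hac, hbc⟩ :=
    (Set.two_lt_ncard_iff (Set.toFinite _)).1 h3'
  by_cases h : a = nst
  · exact ⟨b, c, hbc, hb, hc, fun hh => hab (h ▸ hh.symm ▸ rfl), fun hh => hac (h ▸ hh.symm ▸ rfl)⟩
  by_cases h2 : b = nst
  · exact ⟨a, c, hac, ha, hc, h, fun hh => hbc (h2 ▸ hh.symm ▸ rfl)⟩
  · exact ⟨a, b, hab, ha, hb, h, h2⟩
lemma steiner_disj (hT : T.IsTree) {S : Set V} (hS : MutualVisSet T S)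
    (hL : (leaves T).ncard ≤ S.ncard) (hS3 : 3 ≤ S.ncard)
    {s b1 b2 : V} (hs : s ∈ S) (hb1 : b1 ∈ branchVerts T) (hb2 : b2 ∈ branchVerts T)
    (hop : onPath T b1 s b2) : False := by
  classical
  have hbr1 : 3 ≤ (T.neighborSet b1).ncard := hb1
  have hbr2 : 3 ≤ (T.neighborSet b2).ncard := hb2
  -- s is not a leaf
  have hnotleaf : s ∉ leaves T := by
    intro hsl
    have hsl' : (T.neighborSet s).ncard = 1 := hsl
    by_cases e1 : s = b1
    · rw [e1] at hsl'; omega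
    by_cases e2 : s = b2
    · rw [e2] at hsl'; omega
    · exact leaf_not_internal hT hsl e1 e2 hop
  obtain ⟨ts, hts, htsne⟩ := Set.exists_ne_of_one_lt_ncard (show 1 < S.ncard by omega) s
  obtain ⟨nst, hnst⟩ := dir_exists hT htsne
  have hcom := common_dir hT hS hs hts htsne hnst
  -- two distinct leaves, different from s, not in direction nst from s
  have hbad : ∃ l1 l2, l1 ≠ l2 ∧ l1 ∈ leaves T ∧ l2 ∈ leaves T ∧
      ¬ Dir T s nst l1 ∧ ¬ Dir T s nst l2 := by
    by_cases hsbr : s ∈ branchVerts T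
    · obtain ⟨w1, w2, hw12, ha1, ha2, hn1, hn2⟩ := two_nbrs_ne hT hsbr nst
      obtain ⟨l1, hl1, ho1⟩ := extend_to_leaf hT s w1 ⟨w1, ha1⟩
      obtain ⟨l2, hl2, ho2⟩ := extend_to_leaf hT s w2 ⟨w2, ha2⟩
      have hd1 : Dir T s w1 l1 := ⟨ha1, by
        have : T.dist s w1 = 1 := dist_eq_one_iff_adj.2 ha1
        unfold onPath at ho1; omega⟩
      have hd2 : Dir T s w2 l2 := ⟨ha2, by
        have : T.dist s w2 = 1 := dist_eq_one_iff_adj.2 ha2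
        unfold onPath at ho2; omega⟩
      refine ⟨l1, l2, ?_, hl1, hl2, ?_, ?_⟩
      · intro heq
        rw [heq] at hd1
        exact hw12 (dir_unique hT hd1 hd2)
      · intro hh; exact hn1 (dir_unique hT hh hd1).symm
      · intro hh; exact hn2 (dir_unique hT hh hd2).symm
    · -- s is an interior vertex of the b1-b2 geodesic
      have hs1 : s ≠ b1 := fun h => hsbr (h ▸ hb1)
      have hs2 : s ≠ b2 := fun h => hsbr (h ▸ hb2)
      have hb12 : b1 ≠ b2 := by
        intro h
        rw [← h] at hop
        have h0 : T.dist b1 b1 = 0 := T.dist_self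
        have : T.dist b1 s = 0 := by unfold onPath at hop; omega
        exact hs1 ((hT.isConnected.dist_eq_zero_iff).1 this).symm
      obtain ⟨m1, hm1⟩ := dir_exists hT (show b1 ≠ s from fun h => hs1 h.symm)
      obtain ⟨m2, hm2⟩ := dir_exists hT (show b2 ≠ s from fun h => hs2 h.symm)
      have hm12 : m1 ≠ m2 := by
        intro heq
        have e1 : T.dist s m1 = 1 := dist_eq_one_iff_adj.2 hm1.1
        have hd1 := hm1.2
        have hd2 := hm2.2
        rw [← heq] at hd2
        have t1 : T.dist b1 b2 ≤ T.dist b1 m1 + T.dist m1 b2 := hT.isConnected.dist_triangle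
        have c1 : T.dist b1 m1 = T.dist m1 b1 := T.dist_comm
        have c2 : T.dist b1 s = T.dist s b1 := T.dist_comm
        unfold onPath at hop
        omega
      have hkey : ∃ cs wd, cs ∈ branchVerts T ∧ cs ≠ s ∧ Dir T s wd cs ∧ wd ≠ nst := by
        by_cases hcase : m1 = nst
        · exact ⟨b2, m2, hb2, fun h => hs2 h.symm, hm2, fun h => hm12 (hcase.trans h.symm)⟩
        · exact ⟨b1, m1, hb1, fun h => hs1 h.symm, hm1, hcase⟩
      obtain ⟨cs, wd, hcs, hcss, hdircs, hwdne⟩ := hkey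
      obtain ⟨e, he⟩ := dir_exists hT (show s ≠ cs from fun h => hcss h.symm)
      obtain ⟨v1, v2, hv12, hva1, hva2, hve1, hve2⟩ := two_nbrs_ne hT hcs e
      obtain ⟨l1, hl1, ho1⟩ := extend_to_leaf hT cs v1 ⟨v1, hva1⟩
      obtain ⟨l2, hl2, ho2⟩ := extend_to_leaf hT cs v2 ⟨v2, hva2⟩
      have hd1 : Dir T cs v1 l1 := ⟨hva1, by
        have : T.dist cs v1 = 1 := dist_eq_one_iff_adj.2 hva1
        unfold onPath at ho1; omega⟩
      have hd2 : Dir T cs v2 l2 := ⟨hva2, by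
        have : T.dist cs v2 = 1 := dist_eq_one_iff_adj.2 hva2
        unfold onPath at ho2; omega⟩
      have hdirl : ∀ (l : V) (v : V), l ∈ leaves T → Dir T cs v l → v ≠ e →
          ¬ Dir T s nst l := by
        intro l v hl hd hvne hcontra
        have hls : l ≠ s := fun h => hnotleaf (h ▸ hl)
        have hnol : ¬ onPath T cs s l := by
          intro hcc
          have : Dir T cs v s := dir_of_onPath hT hd hcc (fun h => hcss h.symm)
          exact hvne (dir_unique hT this he)
        obtain ⟨nl, hnl⟩ := dir_exists hT hls
        have heq := dir_eq_of_not_onPath hT hdircs hnl hnol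
        rw [← heq] at hnl
        exact hwdne (dir_unique hT hnl hcontra)
      refine ⟨l1, l2, ?_, hl1, hl2, hdirl l1 v1 hl1 hd1 hve1, hdirl l2 v2 hl2 hd2 hve2⟩
      intro hll
      rw [hll] at hd1
      exact hv12 (dir_unique hT hd1 hd2)
  obtain ⟨l1, l2, hne12, hl1, hl2, hnd1, hnd2⟩ := hbad
  -- the gate map
  have hgate : ∀ s' ∈ S, ∃ l, l ∈ leaves T ∧
      ∀ z, onPath T s' z l → z ≠ s' → z ∉ hull T S := fun s' hs' =>
    gate_exists hT hS hs' (Set.exists_ne_of_one_lt_ncard (show 1 < S.ncard by omega) s')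
  choose! g hg1 hg2 using hgate
  have hinj : Set.InjOn g S := by
    intro s1 hs1 s2 hs2 heq
    by_contra hnee
    obtain ⟨m, hma, hmb, hmc⟩ := median_exists hT s1 s2 (g s1)
    have hmhull : m ∈ hull T S := ⟨s2, hs2, s1, hs1, hmb⟩
    have hm1 : m = s1 := by
      by_contra hcc
      exact hg2 s1 hs1 m hma hcc hmhull
    have hm2 : m = s2 := by
      by_contra hcc
      exact hg2 s2 hs2 m (heq ▸ hmc) hcc hmhull
    exact hnee (hm1 ▸ hm2)
  have hdirg : ∀ s' ∈ S, s' ≠ s → Dir T s nst (g s') := by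
    intro s' hs' hne
    have hgleaf := hg1 s' hs'
    have hgs : g s' ≠ s := fun h => hnotleaf (h ▸ hgleaf)
    have hno : ¬ onPath T s' s (g s') := by
      intro h
      exact hg2 s' hs' s h (Ne.symm hne) (subset_hull hT S hs)
    obtain ⟨ngl, hngl⟩ := dir_exists hT hgs
    have heq := dir_eq_of_not_onPath hT (hcom s' hs' hne) hngl hno
    rwa [heq]
  have hlstar : ∃ lst, lst ∈ leaves T ∧ ¬ Dir T s nst lst ∧ g s ≠ lst := by
    by_cases hgs : g s = l1
    · exact ⟨l2, hl2, hnd2, by rw [hgs]; exact hne12⟩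
    · exact ⟨l1, hl1, hnd1, hgs⟩
  obtain ⟨lst, hlst, hndst, hgsne⟩ := hlstar
  have himg : g '' S ⊆ leaves T \ {lst} := by
    rintro - ⟨s', hs', rfl⟩
    refine ⟨hg1 s' hs', ?_⟩
    simp only [Set.mem_singleton_iff]
    intro hh
    by_cases hss : s' = s
    · exact hgsne (hss ▸ hh)
    · exact hndst (hh ▸ hdirg s' hs' hss)
  have hc1 : (g '' S).ncard = S.ncard := Set.ncard_image_of_injOn hinj
  have hc2 : (g '' S).ncard ≤ (leaves T \ {lst}).ncard :=
    Set.ncard_le_ncard himg (Set.toFinite _)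
  have hc3 : (leaves T \ {lst}).ncard = (leaves T).ncard - 1 :=
    Set.ncard_diff_singleton_of_mem hlst
  have hc4 : 0 < (leaves T).ncard := by
    rw [Set.ncard_pos (Set.toFinite _)]
    exact ⟨l1, hl1⟩
  omega
lemma three_le_leaves (hT : T.IsTree) (hbr : (branchVerts T).Nonempty) :
    3 ≤ (leaves T).ncard := by
  classical
  obtain ⟨c0, hc0⟩ := hbr
  have h3 : 2 < (T.neighborSet c0).ncard := hc0
  obtain ⟨a, b, c, ha, hb, hc, hab, hac, hbc⟩ :=
    (Set.two_lt_ncard_iff (Set.toFinite _)).1 h3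
  obtain ⟨la, hla, hoa⟩ := extend_to_leaf hT c0 a ⟨a, ha⟩
  obtain ⟨lb, hlb, hob⟩ := extend_to_leaf hT c0 b ⟨b, hb⟩
  obtain ⟨lc, hlc, hoc⟩ := extend_to_leaf hT c0 c ⟨c, hc⟩
  have hda : Dir T c0 a la := ⟨ha, by
    have : T.dist c0 a = 1 := dist_eq_one_iff_adj.2 ha
    unfold onPath at hoa; omega⟩
  have hdb : Dir T c0 b lb := ⟨hb, by
    have : T.dist c0 b = 1 := dist_eq_one_iff_adj.2 hb
    unfold onPath at hob; omega⟩
  have hdc : Dir T c0 c lc := ⟨hc, by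
    have : T.dist c0 c = 1 := dist_eq_one_iff_adj.2 hc
    unfold onPath at hoc; omega⟩
  have key : 2 < (leaves T).ncard := by
    rw [Set.two_lt_ncard_iff (Set.toFinite _)]
    refine ⟨la, lb, lc, hla, hlb, hlc, ?_, ?_, ?_⟩
    · intro h; exact hab (dir_unique hT hda (h ▸ hdb))
    · intro h; exact hac (dir_unique hT hda (h ▸ hdc))
    · intro h; exact hbc (dir_unique hT hdb (h ▸ hdc))
  omega

lemma leg_le_one_aux (hT : T.IsTree) {S : Set V} (hS : MutualVisSet T S) (hS3 : 3 ≤ S.ncard)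
    {u bu : V} (hu : u ∈ leaves T) (hbu : bu ∈ branchVerts T)
    (hmin : ∀ c ∈ branchVerts T, T.dist u bu ≤ T.dist u c)
    {a1 a2 : V} (h1 : a1 ∈ S) (h2 : a2 ∈ S)
    (hp1 : onPath T u a1 bu) (hq1 : a1 ≠ bu) (hp2 : onPath T u a2 bu) (hq2 : a2 ≠ bu)
    (hne : a1 ≠ a2) (hlt : T.dist u a1 < T.dist u a2) : False := by
  classical
  have hsub : {a1, a2} ⊆ S := by
    intro x hx
    rcases hx with rfl | hx
    · exact h1
    · simp only [Set.mem_singleton_iff] at hx; exact hx ▸ h2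
  have hdiff : (S \ {a1, a2}).ncard = S.ncard - 2 := by
    rw [Set.ncard_diff hsub, Set.ncard_pair hne]
  obtain ⟨s3, hs3⟩ := Set.nonempty_of_ncard_ne_zero (s := S \ {a1, a2}) (by omega)
  obtain ⟨hs3S, hs3n⟩ := hs3
  have hs31 : s3 ≠ a1 := fun h => hs3n (by simp [h])
  have hs32 : s3 ≠ a2 := fun h => hs3n (by simp [h])
  by_cases hw3 : onPath T u s3 bu ∧ s3 ≠ bu
  · obtain ⟨hp3, hq3⟩ := hw3
    have d31 : T.dist u s3 ≠ T.dist u a1 := fun h => hs31 (eq_of_onPath_dist_eq hT hp3 hp1 h)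
    have d32 : T.dist u s3 ≠ T.dist u a2 := fun h => hs32 (eq_of_onPath_dist_eq hT hp3 hp2 h)
    by_cases c1 : T.dist u s3 < T.dist u a1
    · have ho := order3 hT hp3 hp1 hp2 (by omega) (by omega)
      rcases mv_block hT hS hs3S h2 h1 hs32 ho with h | h
      · exact hs31 h.symm
      · exact hne h
    by_cases c2 : T.dist u s3 < T.dist u a2
    · have ho := order3 hT hp1 hp3 hp2 (by omega) (by omega)
      rcases mv_block hT hS h1 h2 hs3S hne ho with h | h
      · exact hs31 h
      · exact hs32 h
    · have ho := order3 hT hp1 hp2 hp3 (by omega) (by omega)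
      rcases mv_block hT hS h1 hs3S h2 hs31.symm ho with h | h
      · exact hne h.symm
      · exact hs32 h.symm
  · have e1 := leg_exit hT hu hbu hmin hp1 hq1 hw3
    have e2 := leg_exit hT hu hbu hmin hp2 hq2 hw3
    have h12b : onPath T a1 a2 bu := onPath_of_le hT hp1 hp2 hlt.le
    have ho : onPath T a1 a2 s3 := by
      unfold onPath at *
      omega
    rcases mv_block hT hS h1 hs3S h2 hs31.symm ho with h | h
    · exact hne h.symm
    · exact hs32 h.symm

lemma leg_le_one (hT : T.IsTree) {S : Set V} (hS : MutualVisSet T S) (hS3 : 3 ≤ S.ncard)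
    {u bu : V} (hu : u ∈ leaves T) (hbu : bu ∈ branchVerts T)
    (hmin : ∀ c ∈ branchVerts T, T.dist u bu ≤ T.dist u c)
    {s1 s2 : V} (h1 : s1 ∈ S) (h2 : s2 ∈ S)
    (hp1 : onPath T u s1 bu) (hq1 : s1 ≠ bu) (hp2 : onPath T u s2 bu) (hq2 : s2 ≠ bu) :
    s1 = s2 := by
  by_contra hne
  rcases lt_trichotomy (T.dist u s1) (T.dist u s2) with h | h | h
  · exact leg_le_one_aux hT hS hS3 hu hbu hmin h1 h2 hp1 hq1 hp2 hq2 hne h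
  · exact hne (eq_of_onPath_dist_eq hT hp1 hp2 h)
  · exact leg_le_one_aux hT hS hS3 hu hbu hmin h2 h1 hp2 hq2 hp1 hq1 (Ne.symm hne) h

lemma leg_coverage (hT : T.IsTree) (hbr : (branchVerts T).Nonempty) (b : V → V)
    (hb : ∀ u ∈ leaves T, b u ∈ branchVerts T ∧
      ∀ c ∈ branchVerts T, T.dist u (b u) ≤ T.dist u c) {x : V}
    (hx : ∀ b1 ∈ branchVerts T, ∀ b2 ∈ branchVerts T, ¬ onPath T b1 x b2) :
    ∃ u ∈ leaves T, onPath T u x (b u) ∧ x ≠ b u := by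
  classical
  obtain ⟨c0, hc0⟩ := hbr
  have h3 : 2 < (T.neighborSet c0).ncard := hc0
  have hpos : 0 < (T.neighborSet c0).ncard := by omega
  obtain ⟨n0, hn0⟩ := (Set.ncard_pos (Set.toFinite _)).1 hpos
  obtain ⟨u, hu, hxq⟩ := extend_to_leaf hT c0 x ⟨n0, hn0⟩
  have hbu := (hb u hu).1
  have hmin := (hb u hu).2
  have hub : u ≠ b u := by
    intro h
    have hl : (T.neighborSet u).ncard = 1 := hu
    have hb3 : 3 ≤ (T.neighborSet (b u)).ncard := hbu
    rw [h] at hl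
    omega
  refine ⟨u, hu, ?_⟩
  by_contra hnW
  have hexit := leg_exit hT hu hbu hmin (onPath_self_left hT u (b u)) hub hnW
  apply hx c0 hc0 (b u) hbu
  have t1 : T.dist c0 (b u) ≤ T.dist c0 x + T.dist x (b u) := hT.isConnected.dist_triangle
  have t2 : T.dist c0 u ≤ T.dist c0 (b u) + T.dist (b u) u := hT.isConnected.dist_triangle
  have c1 : T.dist x u = T.dist u x := T.dist_comm
  have c2 : T.dist (b u) x = T.dist x (b u) := T.dist_comm
  have c3 : T.dist (b u) u = T.dist u (b u) := T.dist_comm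
  unfold onPath at *
  omega

end TreeAux

/-- In a finite tree `T` with a branch vertex, a maximum mutual-visibility set
`S` contains exactly one vertex of each leg set `W(u) = V(P_T(u, b(u))) \ {b(u)}`
(`u` a leaf, `b(u)` the nearest branch vertex); in particular `S` is disjoint
from the Steiner subtree `T⟨Br(T)⟩`. -/
theorem stmt14 [Fintype V] (T : SimpleGraph V) (hT : T.IsTree)
    (hbr : (branchVerts T).Nonempty) (b : V → V)
    (hb : ∀ u ∈ leaves T, b u ∈ branchVerts T ∧
      ∀ c ∈ branchVerts T, T.dist u (b u) ≤ T.dist u c)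
    (p : ∀ u : V, T.Walk u (b u)) (hp : ∀ u, (p u).IsPath)
    (S : Set V) (hS : MutualVisSet T S) (hcard : S.ncard = muNumber T) :
    (∀ u ∈ leaves T, (S ∩ ({x | x ∈ (p u).support} \ {b u})).ncard = 1) ∧
    ∀ x ∈ S, x ∉ (steinerSub T (branchVerts T)).verts := by
  classical
  have hL3 := three_le_leaves hT hbr
  have hSL : (leaves T).ncard ≤ S.ncard := by
    rw [hcard]; exact mu_ge_leaves hT
  have hS3 : 3 ≤ S.ncard := hL3.trans hSL
  have hdisj : ∀ x ∈ S, x ∉ (steinerSub T (branchVerts T)).verts := by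
    rintro x hx ⟨u0, hu0, v0, hv0, q, hq, hmem⟩
    exact steiner_disj hT hS hSL hS3 hx hu0 hv0 (onPath_of_mem_path hT hq hmem)
  refine ⟨?_, hdisj⟩
  have hcov : ∀ s ∈ S, ∃ u, u ∈ leaves T ∧ onPath T u s (b u) ∧ s ≠ b u := by
    intro s hs
    obtain ⟨u, hu, h⟩ := leg_coverage hT hbr b hb (fun b1 hb1 b2 hb2 hop =>
      steiner_disj hT hS hSL hS3 hs hb1 hb2 hop)
    exact ⟨u, hu, h⟩
  choose! f hf1 hf2 hf3 using hcov
  have hfinj : Set.InjOn f S := by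
    intro s1 hs1 s2 hs2 heq
    have hu1 := hf1 s1 hs1
    have hp2 : onPath T (f s1) s2 (b (f s1)) := by rw [heq]; exact hf2 s2 hs2
    have hq2 : s2 ≠ b (f s1) := by rw [heq]; exact hf3 s2 hs2
    exact leg_le_one hT hS hS3 hu1 (hb _ hu1).1 (hb _ hu1).2 hs1 hs2
      (hf2 s1 hs1) (hf3 s1 hs1) hp2 hq2
  have himg : f '' S = leaves T := by
    apply Set.eq_of_subset_of_ncard_le
    · rintro - ⟨s, hs, rfl⟩; exact hf1 s hs
    · rw [Set.ncard_image_of_injOn hfinj]; exact hSL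
    · exact Set.toFinite _
  intro u hu
  have hset : S ∩ ({x | x ∈ (p u).support} \ {b u}) =
      {x | x ∈ S ∧ onPath T u x (b u) ∧ x ≠ b u} := by
    ext x
    simp only [Set.mem_inter_iff, Set.mem_diff, Set.mem_setOf_eq, Set.mem_singleton_iff]
    constructor
    · rintro ⟨hxs, hsup, hne⟩
      exact ⟨hxs, onPath_of_mem_path hT (hp u) hsup, hne⟩
    · rintro ⟨hxs, hop, hne⟩
      refine ⟨hxs, ?_, hne⟩
      rw [path_eq_PP hT (p u) (hp u)]
      exact (mem_PP_iff hT).2 hop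
  rw [hset]
  obtain ⟨s0, hs0S, hs0f⟩ : ∃ s0 ∈ S, f s0 = u := by
    have hmem : u ∈ f '' S := himg ▸ hu
    obtain ⟨s0, h1, h2⟩ := hmem
    exact ⟨s0, h1, h2⟩
  have hop0 : onPath T u s0 (b u) := by
    have := hf2 s0 hs0S
    rwa [hs0f] at this
  have hne0 : s0 ≠ b u := by
    have := hf3 s0 hs0S
    rwa [hs0f] at this
  rw [Set.ncard_eq_one]
  refine ⟨s0, ?_⟩
  ext x
  simp only [Set.mem_setOf_eq, Set.mem_singleton_iff]
  constructor
  · rintro ⟨hxs, hop, hne⟩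
    exact leg_le_one hT hS hS3 hu (hb u hu).1 (hb u hu).2 hxs hs0S hop hne hop0 hne0
  · rintro rfl
    exact ⟨hs0S, hop0, hne0⟩
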